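/- arXiv:1901.08186 — 4 statements merged into one kernel-verified Lean document; each statement's English description precedes it below -/
import Mathlib

section
/- Let K be an invertible ℓ×ℓ matrix over F_2. A single polarization step is capacity preserving: for every real z, ∑_{i=1}^ℓ f_i(z) = ℓ·z. -/
/-- The support of a vector over `ZMod 2`. -/
def supp {ℓ : ℕ} (v : Fin ℓ → ZMod 2) : Set (Fin ℓ) := {j | v j ≠ 0}

/-- The Hamming weight of a vector over `ZMod 2`. -/
def wt {ℓ : ℕ} (v : Fin ℓ → ZMod 2) : ℕ :=
  (Finset.univ.filter fun j => v j ≠ 0).card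

/-- The kernel code `C_i`: the span of the rows `g_{i+1}, …, g_ℓ` of `K`
(rows of index `≥ i` in 0-based indexing). -/
def kernelCode {ℓ : ℕ} (K : Matrix (Fin ℓ) (Fin ℓ) (ZMod 2)) (i : ℕ) :
    Submodule (ZMod 2) (Fin ℓ → ZMod 2) :=
  Submodule.span (ZMod 2) {v | ∃ r : Fin ℓ, i ≤ (r : ℕ) ∧ v = K r}

/-- `e` is an uncorrectable erasure pattern for the bit-channel of (0-based) index `i`. -/
def Uncorrectable {ℓ : ℕ} (K : Matrix (Fin ℓ) (Fin ℓ) (ZMod 2)) (i : Fin ℓ)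
    (e : Fin ℓ → ZMod 2) : Prop :=
  ∃ u' u'' : Fin ℓ → ZMod 2,
    (∀ j, j < i → u' j = u'' j) ∧ u' i ≠ u'' i ∧
      ∀ j, e j = 0 → Matrix.vecMul u' K j = Matrix.vecMul u'' K j

/-- `E_{i,w}`: the number of uncorrectable erasure patterns of weight `w`
for bit-channel `i`. -/
noncomputable def Ecount {ℓ : ℕ} (K : Matrix (Fin ℓ) (Fin ℓ) (ZMod 2)) (i : Fin ℓ)
    (w : ℕ) : ℕ :=
  Nat.card {e : Fin ℓ → ZMod 2 // Uncorrectable K i e ∧ wt e = w}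

/-- `f_i(z) = ∑_{w=0}^{ℓ} E_{i,w} z^w (1-z)^{ℓ-w}`. -/
noncomputable def fpoly {ℓ : ℕ} (K : Matrix (Fin ℓ) (Fin ℓ) (ZMod 2)) (i : Fin ℓ)
    (z : ℝ) : ℝ :=
  ∑ w ∈ Finset.range (ℓ + 1), (Ecount K i w : ℝ) * z ^ w * (1 - z) ^ (ℓ - w)

/-- Dual code with respect to the standard bilinear form `⟨u,v⟩ = ∑ j, u j * v j`. -/
def dualCode {ℓ : ℕ} (C : Submodule (ZMod 2) (Fin ℓ → ZMod 2)) :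
    Submodule (ZMod 2) (Fin ℓ → ZMod 2) where
  carrier := {v | ∀ c ∈ C, ∑ j, v j * c j = 0}
  add_mem' := by
    intro a b ha hb c hc
    simpa [add_mul, Finset.sum_add_distrib] using by rw [ha c hc, hb c hc]; simp
  zero_mem' := by intro c hc; simp
  smul_mem' := by
    intro r a ha c hc
    simp only [Pi.smul_apply, smul_eq_mul, mul_assoc, ← Finset.mul_sum, Set.mem_setOf_eq]
    rw [ha c hc, mul_zero]

/-- `K` is self-dual if `C_i = C_{ℓ-i}^⊥` for all `0 ≤ i ≤ ℓ`. -/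
def SelfDual {ℓ : ℕ} (K : Matrix (Fin ℓ) (Fin ℓ) (ZMod 2)) : Prop :=
  ∀ i ≤ ℓ, kernelCode K i = dualCode (kernelCode K (ℓ - i))

/-!
Fix an erasure pattern `e`. The inputs `u` whose codeword `u K` is covered by `e` form a subspace
of dimension `wt e` (as `K` is invertible), and `e` is uncorrectable for bit-channel `i` exactly
when `i` is a pivot of that subspace, i.e. the leading coordinate of one of its vectors. A subspace
has as many pivots as its dimension, so each pattern of weight `w` is uncorrectable for exactly `w`
bit-channels and `∑ i, E_{i,w} = w * ℓ.choose w`. The claim is then the mean of the binomial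
distribution: `∑ w, w * ℓ.choose w * z ^ w * (1 - z) ^ (ℓ - w) = ℓ * z`.
-/

open Module Finset

section Pivots

variable (F : Type*) [Field F]

def vanishingOn {ι : Type*} (s : Set ι) : Submodule F (ι → F) :=
  ⨅ i ∈ s, LinearMap.ker (LinearMap.proj i)

variable {F}

theorem mem_vanishingOn {ι : Type*} {s : Set ι} {v : ι → F} :
    v ∈ vanishingOn F s ↔ ∀ i ∈ s, v i = 0 := by
  simp [vanishingOn]

theorem finrank_vanishingOn {ι : Type*} [Fintype ι] (s : Set ι) [DecidablePred (· ∈ s)] :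
    finrank F (vanishingOn F s) = Fintype.card ↑sᶜ := by
  rw [vanishingOn, (LinearMap.iInfKerProjEquiv F (fun _ : ι => F) disjoint_compl_left
    (Set.compl_union_self s).ge).finrank_eq, Module.finrank_fintype_fun_eq_card]

open Classical in
theorem finrank_eq_finrank_inf_ker_add {V : Type*} [AddCommGroup V] [Module F V]
    [FiniteDimensional F V] (P : Submodule F V) (f : V →ₗ[F] F) :
    finrank F P =
      finrank F ↥(P ⊓ LinearMap.ker f) + if ∃ v ∈ P, f v ≠ 0 then 1 else 0 := by
  have h := (f.domRestrict P).finrank_range_add_finrank_ker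
  rw [LinearMap.range_domRestrict, LinearMap.ker_domRestrict, ← Submodule.finrank_map_subtype_eq,
    Submodule.map_comap_subtype] at h
  have h1 : finrank F (P.map f) ≤ 1 := (P.map f).finrank_le.trans_eq (Module.finrank_self F)
  have h0 : finrank F (P.map f) = 0 ↔ ∀ v ∈ P, f v = 0 := by
    rw [Submodule.finrank_eq_zero, ← LinearMap.le_ker_iff_map]
    rfl
  split_ifs with hv
  · obtain ⟨v, hvP, hfv⟩ := hv
    have : finrank F (P.map f) ≠ 0 := fun h2 => hfv (h0.mp h2 v hvP)
    omega
  · have : finrank F (P.map f) = 0 := h0.mpr fun v hvP => by_contra fun hfv => hv ⟨v, hvP, hfv⟩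
    omega

variable {n : ℕ}

/-- The pivot columns of the reduced row echelon form of any basis of `W`. -/
def IsPivot (W : Submodule F (Fin n → F)) (i : Fin n) : Prop :=
  ∃ u ∈ W, (∀ j < i, u j = 0) ∧ u i ≠ 0

theorem vanishingOn_lt_succ (i : Fin n) :
    vanishingOn F {j : Fin n | (j : ℕ) < i + 1} =
      vanishingOn F {j : Fin n | (j : ℕ) < i} ⊓ LinearMap.ker (LinearMap.proj i) := by
  ext v
  simp only [Submodule.mem_inf, mem_vanishingOn, Set.mem_ofPred_eq, LinearMap.mem_ker,
    LinearMap.proj_apply, Nat.lt_succ_iff_lt_or_eq, or_imp, forall_and, Fin.val_inj,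
    forall_eq]

theorem isPivot_iff (W : Submodule F (Fin n → F)) (i : Fin n) :
    IsPivot W i ↔ ∃ v ∈ W ⊓ vanishingOn F {j : Fin n | (j : ℕ) < i}, v i ≠ 0 := by
  simp only [IsPivot, Submodule.mem_inf, mem_vanishingOn, Set.mem_ofPred_eq, Fin.lt_def, and_assoc]

open Classical in
theorem card_isPivot (W : Submodule F (Fin n → F)) : #{i | IsPivot W i} = finrank F W := by
  -- `d` drops by one at `i` exactly when `i` is a pivot, and runs from `finrank F W` down to `0`.
  let d (k : ℕ) : ℕ := finrank F ↥(W ⊓ vanishingOn F {j : Fin n | (j : ℕ) < k})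
  have step (i : Fin n) : (if IsPivot W i then 1 else 0 : ℤ) = d i - d (i + 1) := by
    have h := finrank_eq_finrank_inf_ker_add (W ⊓ vanishingOn F {j | (j : ℕ) < i})
      (LinearMap.proj i)
    rw [inf_assoc, ← vanishingOn_lt_succ] at h
    simp only [LinearMap.proj_apply, ← isPivot_iff] at h
    split_ifs at h ⊢ <;> simp only [d] <;> omega
  have h0 : d 0 = finrank F W := by
    simp only [d]
    rw [show vanishingOn F {j : Fin n | (j : ℕ) < 0} = ⊤ from Submodule.eq_top_iff'.mpr fun v =>
      mem_vanishingOn.mpr fun j hj => absurd hj (Nat.not_lt_zero _), inf_top_eq]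
  have hn : d n = 0 := Submodule.finrank_eq_zero.mpr <| eq_bot_iff.mpr fun v hv =>
    (Submodule.mem_bot F).mpr <| funext fun j => mem_vanishingOn.mp hv.2 j j.isLt
  have h : (#{i | IsPivot W i} : ℤ) = ∑ i : Fin n, ((d i : ℤ) - d (i + 1)) := by
    rw [card_filter]
    push_cast
    exact sum_congr rfl fun i _ => step i
  rw [Fin.sum_univ_eq_sum_range (fun k => (d k : ℤ) - d (k + 1)), sum_range_sub', h0, hn] at h
  omega

theorem finrank_comap_vecMulLinear {m : Type*} [Fintype m] [DecidableEq m] {K : Matrix m m F}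
    (hK : IsUnit K.det) (P : Submodule F (m → F)) :
    finrank F (P.comap K.vecMulLinear) = finrank F P := by
  have hu : IsUnit K := (Matrix.isUnit_iff_isUnit_det K).mpr hK
  let e := LinearEquiv.ofBijective K.vecMulLinear
    ⟨Matrix.vecMul_injective_of_isUnit hu, Matrix.vecMul_surjective_iff_isUnit.mpr hu⟩
  rw [show P.comap K.vecMulLinear = P.comap (e : (m → F) →ₗ[F] m → F) from rfl,
    Submodule.comap_equiv_eq_map_symm, LinearEquiv.finrank_map_eq]

end Pivots

section Erasure

variable {ℓ : ℕ}

def coveredInputs (K : Matrix (Fin ℓ) (Fin ℓ) (ZMod 2)) (e : Fin ℓ → ZMod 2) :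
    Submodule (ZMod 2) (Fin ℓ → ZMod 2) :=
  (vanishingOn (ZMod 2) {j | e j = 0}).comap K.vecMulLinear

theorem mem_coveredInputs {K : Matrix (Fin ℓ) (Fin ℓ) (ZMod 2)} {e u : Fin ℓ → ZMod 2} :
    u ∈ coveredInputs K e ↔ ∀ j, e j = 0 → Matrix.vecMul u K j = 0 := by
  simp [coveredInputs, mem_vanishingOn]

theorem finrank_coveredInputs {K : Matrix (Fin ℓ) (Fin ℓ) (ZMod 2)} (hK : IsUnit K.det)
    (e : Fin ℓ → ZMod 2) : finrank (ZMod 2) (coveredInputs K e) = wt e := by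
  rw [coveredInputs, finrank_comap_vecMulLinear hK, finrank_vanishingOn, Fintype.card_subtype]
  rfl

theorem uncorrectable_iff_isPivot (K : Matrix (Fin ℓ) (Fin ℓ) (ZMod 2)) (i : Fin ℓ)
    (e : Fin ℓ → ZMod 2) : Uncorrectable K i e ↔ IsPivot (coveredInputs K e) i := by
  constructor
  · rintro ⟨u', u'', hlt, hi, hcov⟩
    refine ⟨u' - u'', mem_coveredInputs.mpr fun j hj => ?_, fun j hj => ?_, sub_ne_zero.mpr hi⟩
    · rw [Matrix.sub_vecMul, Pi.sub_apply, hcov j hj, sub_self]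
    · rw [Pi.sub_apply, hlt j hj, sub_self]
  · rintro ⟨u, hu, hlt, hi⟩
    refine ⟨u, 0, fun j hj => hlt j hj, hi, fun j hj => ?_⟩
    rw [Matrix.zero_vecMul]
    exact mem_coveredInputs.mp hu j hj

open Classical in
theorem card_uncorrectable {K : Matrix (Fin ℓ) (Fin ℓ) (ZMod 2)} (hK : IsUnit K.det)
    (e : Fin ℓ → ZMod 2) : #{i | Uncorrectable K i e} = wt e := by
  simp_rw [uncorrectable_iff_isPivot]
  rw [card_isPivot, finrank_coveredInputs hK]

end Erasure

section Counting

variable {ℓ : ℕ}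

theorem card_wt_eq_choose (w : ℕ) : #{e : Fin ℓ → ZMod 2 | wt e = w} = ℓ.choose w := by
  have hcoord : ∀ a : ZMod 2, (if a ≠ 0 then 1 else 0) = a := by decide
  calc #{e : Fin ℓ → ZMod 2 | wt e = w} = #(powersetCard w (univ : Finset (Fin ℓ))) := by
        refine card_nbij' (fun e => ({j | e j ≠ 0} : Finset (Fin ℓ)))
          (fun s j => if j ∈ s then 1 else 0) ?_ ?_ ?_ ?_
        · intro e he
          simpa [mem_powersetCard, wt] using he
        · intro s hs
          simpa [wt] using (mem_powersetCard.mp hs).2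
        · intro e _
          funext j
          simpa using hcoord (e j)
        · intro s _
          ext j
          by_cases hj : j ∈ s <;> simp [hj]
    _ = ℓ.choose w := by simp

open Classical in
theorem sum_Ecount {K : Matrix (Fin ℓ) (Fin ℓ) (ZMod 2)} (hK : IsUnit K.det) (w : ℕ) :
    ∑ i, Ecount K i w = w * ℓ.choose w := by
  have hE (i : Fin ℓ) : Ecount K i w = #(bipartiteAbove (fun i e => Uncorrectable K i e)
      {e | wt e = w} i) := by
    rw [Ecount, Nat.card_eq_fintype_card, Fintype.card_subtype, bipartiteAbove, filter_filter]
    simp only [and_comm]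
  calc ∑ i, Ecount K i w
      = ∑ e ∈ {e | wt e = w}, #{i | Uncorrectable K i e} := by
        simp only [hE]
        exact sum_card_bipartiteAbove_eq_sum_card_bipartiteBelow _
    _ = ∑ e ∈ ({e | wt e = w} : Finset (Fin ℓ → ZMod 2)), w :=
        sum_congr rfl fun e he => (card_uncorrectable hK e).trans (mem_filter.mp he).2
    _ = w * ℓ.choose w := by rw [sum_const, card_wt_eq_choose, smul_eq_mul, mul_comm]

end Counting

theorem sum_fpoly_eq_general {ℓ : ℕ}
    (K : Matrix (Fin ℓ) (Fin ℓ) (ZMod 2)) (hK : IsUnit K.det) (z : ℝ) :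
    ∑ i : Fin ℓ, fpoly K i z = ℓ * z := by
  have hE (w : ℕ) : ∑ i, (Ecount K i w : ℝ) = w * ℓ.choose w := by
    exact_mod_cast sum_Ecount hK w
  calc ∑ i, fpoly K i z
      = ∑ w ∈ range (ℓ + 1), (∑ i, (Ecount K i w : ℝ)) * z ^ w * (1 - z) ^ (ℓ - w) := by
        simp only [fpoly, sum_mul]
        exact sum_comm
    _ = (∑ w ∈ range (ℓ + 1), w • bernsteinPolynomial ℝ ℓ w).eval z := by
        simp [hE, bernsteinPolynomial, Polynomial.eval_finsetSum, mul_assoc]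
    _ = ℓ * z := by rw [bernsteinPolynomial.sum_smul]; simp

/-- A polarization step is capacity preserving: `∑_{i=1}^ℓ f_i(z) = ℓ·z`. -/
theorem sum_fpoly_eq {ℓ : ℕ} (hℓ : 0 < ℓ)
    (K : Matrix (Fin ℓ) (Fin ℓ) (ZMod 2)) (hK : IsUnit K.det) (z : ℝ) :
    ∑ i : Fin ℓ, fpoly K i z = ℓ * z :=
  sum_fpoly_eq_general K hK z
end

section
/- (Duality Theorem) Let K be an invertible self-dual ℓ×ℓ matrix over F_2. Then for every i with 1 ≤ i ≤ ℓ and every real z, f_{ℓ+1-i}(z) = 1 - f_i(1-z). -/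
/-! An erasure pattern `e` is uncorrectable for bit-channel `i` (0-based) iff
`g_i ∈ C_{i+1} + S(e)`, where `S(e)` is the space of vectors supported in `supp e`, and, for
invertible `K`, iff some `c ∈ C_i \ C_{i+1}` lies in `S(e)`. Self-duality identifies
`C_{ℓ-1-i}` and `C_{ℓ-i}` with `C_{i+1}^⊥` and `C_i^⊥`, and since `S(e)^⊥` is `S` of the
complementary pattern `e + 1`, taking orthogonals turns the second criterion for channel
`ℓ-1-i` and `e` into the negation of the first for channel `i` and `e + 1`. Summing
`z^{wt e} (1-z)^{ℓ - wt e}` over all patterns gives `1`, and complementation swaps `z` and `1 - z`.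
-/

open Matrix

section Codes

variable {ℓ : ℕ}

theorem zmod2_eq_one_of_ne_zero {a : ZMod 2} (ha : a ≠ 0) : a = 1 := by
  revert a; decide

theorem zmod2_add_one_ne_zero_iff (a : ZMod 2) : a + 1 ≠ 0 ↔ a = 0 := by
  revert a; decide

theorem mem_dualCode {C : Submodule (ZMod 2) (Fin ℓ → ZMod 2)} {v : Fin ℓ → ZMod 2} :
    v ∈ dualCode C ↔ ∀ c ∈ C, v ⬝ᵥ c = 0 :=
  Iff.rfl

theorem dualCode_eq_orthogonal (C : Submodule (ZMod 2) (Fin ℓ → ZMod 2)) :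
    dualCode C = LinearMap.BilinForm.orthogonal (dotProductBilin (ZMod 2) (ZMod 2)) C := by
  ext v
  simp only [mem_dualCode, LinearMap.BilinForm.mem_orthogonal_iff, dotProductBilin_apply_apply,
    dotProduct_comm v]

theorem dualCode_dualCode (C : Submodule (ZMod 2) (Fin ℓ → ZMod 2)) :
    dualCode (dualCode C) = C := by
  rw [dualCode_eq_orthogonal, dualCode_eq_orthogonal]
  refine LinearMap.BilinForm.orthogonal_orthogonal
    ⟨fun x hx => dotProduct_eq_zero x hx,
      fun y hy => dotProduct_eq_zero y fun x => (dotProduct_comm y x).trans (hy x)⟩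
    (fun x y h => (dotProduct_comm y x).trans h) C

theorem dualCode_sup (A B : Submodule (ZMod 2) (Fin ℓ → ZMod 2)) :
    dualCode (A ⊔ B) = dualCode A ⊓ dualCode B := by
  ext v
  simp only [Submodule.mem_inf, mem_dualCode]
  refine ⟨fun h => ⟨fun a ha => h a (Submodule.mem_sup_left ha),
    fun b hb => h b (Submodule.mem_sup_right hb)⟩, ?_⟩
  rintro ⟨hA, hB⟩ c hc
  obtain ⟨a, ha, b, hb, rfl⟩ := Submodule.mem_sup.mp hc
  rw [dotProduct_add, hA a ha, hB b hb, add_zero]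

theorem mem_dualCode_span_singleton {v x : Fin ℓ → ZMod 2} :
    v ∈ dualCode (Submodule.span (ZMod 2) {x}) ↔ v ⬝ᵥ x = 0 := by
  rw [mem_dualCode]
  refine ⟨fun h => h x (Submodule.mem_span_singleton_self x), fun h y hy => ?_⟩
  obtain ⟨a, rfl⟩ := Submodule.mem_span_singleton.mp hy
  rw [dotProduct_smul, h, smul_zero]

def supportedOn (S : Set (Fin ℓ)) : Submodule (ZMod 2) (Fin ℓ → ZMod 2) where
  carrier := {v | ∀ j ∉ S, v j = 0}
  add_mem' ha hb j hj := by rw [Pi.add_apply, ha j hj, hb j hj, add_zero]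
  zero_mem' _ _ := rfl
  smul_mem' a v hv j hj := by rw [Pi.smul_apply, hv j hj, smul_zero]

theorem mem_supportedOn {S : Set (Fin ℓ)} {v : Fin ℓ → ZMod 2} :
    v ∈ supportedOn S ↔ ∀ j ∉ S, v j = 0 :=
  Iff.rfl

theorem dualCode_supportedOn (S : Set (Fin ℓ)) :
    dualCode (supportedOn S) = supportedOn Sᶜ := by
  ext v
  rw [mem_dualCode, mem_supportedOn]
  constructor
  · intro h j hj
    have hsingle : Pi.single j 1 ∈ supportedOn S := fun k hk =>
      Pi.single_eq_of_ne (by rintro rfl; exact hk (not_not.mp hj)) 1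
    simpa only [dotProduct_single_one] using h _ hsingle
  · intro h c hc
    refine Finset.sum_eq_zero fun j _ => ?_
    by_cases hj : j ∈ S
    · rw [h j (not_not.mpr hj), zero_mul]
    · rw [hc j hj, mul_zero]

theorem supp_add_one (e : Fin ℓ → ZMod 2) : supp (e + 1) = (supp e)ᶜ :=
  Set.ext fun j => (zmod2_add_one_ne_zero_iff (e j)).trans not_not.symm

theorem kernelCode_eq_map_vecMul (K : Matrix (Fin ℓ) (Fin ℓ) (ZMod 2)) (i : ℕ) :
    kernelCode K i = (supportedOn {j | i ≤ (j : ℕ)}).map K.vecMulLinear := by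
  apply le_antisymm
  · rw [kernelCode, Submodule.span_le]
    rintro v ⟨r, hr, rfl⟩
    refine ⟨Pi.single r 1, fun j hj => Pi.single_eq_of_ne ?_ 1, ?_⟩
    · rintro rfl; exact hj hr
    · exact single_one_vecMul r K
  · rintro v ⟨u, hu, rfl⟩
    rw [Matrix.vecMulLinear_apply, Matrix.vecMul_eq_sum]
    refine Submodule.sum_mem _ fun r _ => ?_
    by_cases hr : i ≤ (r : ℕ)
    · exact Submodule.smul_mem _ _ (Submodule.subset_span ⟨r, hr, rfl⟩)
    · rw [hu r hr, zero_smul]; exact Submodule.zero_mem _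

theorem kernelCode_eq_span_row_sup (K : Matrix (Fin ℓ) (Fin ℓ) (ZMod 2)) (i : Fin ℓ) :
    kernelCode K i = Submodule.span (ZMod 2) {K i} ⊔ kernelCode K (i + 1) := by
  rw [kernelCode, kernelCode, ← Submodule.span_insert]
  congr 1
  ext v
  simp only [Set.mem_insert_iff, Set.mem_ofPred_eq]
  constructor
  · rintro ⟨r, hr, rfl⟩
    rcases hr.eq_or_lt with h | h
    · exact Or.inl (congrArg K (Fin.ext h.symm))
    · exact Or.inr ⟨r, h, rfl⟩
  · rintro (rfl | ⟨r, hr, rfl⟩)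
    · exact ⟨i, le_rfl, rfl⟩
    · exact ⟨r, by omega, rfl⟩

theorem row_notMem_kernelCode_succ {K : Matrix (Fin ℓ) (Fin ℓ) (ZMod 2)} (hK : IsUnit K.det)
    (i : Fin ℓ) : K i ∉ kernelCode K (i + 1) := by
  have hrows : {v | ∃ r : Fin ℓ, (i : ℕ) + 1 ≤ r ∧ v = K r} = K.row '' {r | (i : ℕ) + 1 ≤ r} := by
    ext v; simp [eq_comm]; rfl
  rw [kernelCode, hrows]
  exact (Matrix.linearIndependent_rows_of_isUnit ((Matrix.isUnit_iff_isUnit_det K).mpr hK)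
    ).notMem_span_image (by simp)

theorem uncorrectable_iff_row_mem_sup (K : Matrix (Fin ℓ) (Fin ℓ) (ZMod 2)) (i : Fin ℓ)
    (e : Fin ℓ → ZMod 2) :
    Uncorrectable K i e ↔ K i ∈ kernelCode K (i + 1) ⊔ supportedOn (supp e) := by
  rw [kernelCode_eq_map_vecMul]
  constructor
  · rintro ⟨u', u'', hlow, hi, hoff⟩
    have hu₀ : u' - u'' - Pi.single i 1 ∈ supportedOn {j | (i : ℕ) + 1 ≤ j} := by
      intro j hj
      rcases (Nat.lt_succ_iff.mp (not_le.mp hj)).lt_or_eq with h | h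
      · have hji : j ≠ i := by rintro rfl; exact h.false
        rw [Pi.sub_apply, Pi.sub_apply, hlow j h, sub_self, Pi.single_eq_of_ne hji, sub_zero]
      · obtain rfl : j = i := Fin.ext h
        rw [Pi.sub_apply, Pi.sub_apply, Pi.single_eq_same,
          zmod2_eq_one_of_ne_zero (sub_ne_zero.mpr hi), sub_self]
    have hsupp : (u' - u'') ᵥ* K ∈ supportedOn (supp e) := fun j hj => by
      rw [sub_vecMul, Pi.sub_apply, sub_eq_zero]
      exact hoff j (not_not.mp hj)
    refine Submodule.mem_sup.mpr ⟨_, neg_mem ⟨_, hu₀, rfl⟩, _, hsupp, ?_⟩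
    rw [vecMulLinear_apply, Matrix.sub_vecMul, single_one_vecMul]
    abel
  · intro h
    obtain ⟨_, ⟨u₀, hu₀, rfl⟩, s, hs, hsum⟩ := Submodule.mem_sup.mp h
    refine ⟨Pi.single i 1 - u₀, 0, fun j hj => ?_, ?_, fun j hj => ?_⟩
    · rw [Pi.sub_apply, Pi.single_eq_of_ne hj.ne, hu₀ j (by simp; omega), Pi.zero_apply, sub_zero]
    · rw [Pi.sub_apply, Pi.single_eq_same, hu₀ i (by simp), Pi.zero_apply, sub_zero]
      exact one_ne_zero
    · have hs' : K i - u₀ ᵥ* K = s := by rw [← hsum, vecMulLinear_apply]; abel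
      rw [zero_vecMul, sub_vecMul, single_one_vecMul, row_def, hs']
      exact hs j (not_not.mpr hj)

theorem uncorrectable_iff_exists_mem_kernelCode {K : Matrix (Fin ℓ) (Fin ℓ) (ZMod 2)}
    (hK : IsUnit K.det) (i : Fin ℓ) (e : Fin ℓ → ZMod 2) :
    Uncorrectable K i e ↔
      ∃ c ∈ kernelCode K i, c ∉ kernelCode K (i + 1) ∧ c ∈ supportedOn (supp e) := by
  rw [uncorrectable_iff_row_mem_sup, kernelCode_eq_span_row_sup]
  constructor
  · intro h
    obtain ⟨w, hw, c, hc, hsum⟩ := Submodule.mem_sup.mp h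
    refine ⟨c, ?_, fun hc' => row_notMem_kernelCode_succ hK i (hsum ▸ add_mem hw hc'), hc⟩
    refine Submodule.mem_sup.mpr ⟨K i, Submodule.mem_span_singleton_self _, -w, neg_mem hw, ?_⟩
    rw [← hsum]; abel
  · rintro ⟨_, hc, hc', hsupp⟩
    obtain ⟨_, hx, w, hw, rfl⟩ := Submodule.mem_sup.mp hc
    obtain ⟨a, rfl⟩ := Submodule.mem_span_singleton.mp hx
    obtain rfl : a = 1 := by
      refine zmod2_eq_one_of_ne_zero fun ha => ?_
      rw [ha, zero_smul, zero_add] at hc'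
      exact hc' hw
    rw [one_smul] at hsupp
    exact Submodule.mem_sup.mpr ⟨-w, neg_mem hw, _, hsupp, by abel⟩

theorem SelfDual.kernelCode_rev {K : Matrix (Fin ℓ) (Fin ℓ) (ZMod 2)} (hsd : SelfDual K)
    (i : Fin ℓ) : kernelCode K i.rev = dualCode (kernelCode K (i + 1)) := by
  rw [Fin.val_rev, hsd _ (by omega)]
  congr 2
  omega

theorem SelfDual.kernelCode_rev_succ {K : Matrix (Fin ℓ) (Fin ℓ) (ZMod 2)} (hsd : SelfDual K)
    (i : Fin ℓ) : kernelCode K (i.rev + 1) = dualCode (kernelCode K i) := by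
  rw [Fin.val_rev, show ℓ - (i + 1) + 1 = ℓ - i by omega, hsd _ (by omega)]
  congr 2
  omega

theorem mem_dualCode_kernelCode_iff {K : Matrix (Fin ℓ) (Fin ℓ) (ZMod 2)} {i : Fin ℓ}
    {c : Fin ℓ → ZMod 2} (hc : c ∈ dualCode (kernelCode K (i + 1))) :
    c ∈ dualCode (kernelCode K i) ↔ c ⬝ᵥ K i = 0 := by
  rw [kernelCode_eq_span_row_sup, dualCode_sup, Submodule.mem_inf, mem_dualCode_span_singleton]
  exact and_iff_left hc

theorem SelfDual.uncorrectable_rev_iff {K : Matrix (Fin ℓ) (Fin ℓ) (ZMod 2)} (hsd : SelfDual K)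
    (hK : IsUnit K.det) (i : Fin ℓ) (e : Fin ℓ → ZMod 2) :
    Uncorrectable K i.rev e ↔ ¬ Uncorrectable K i (e + 1) := by
  rw [uncorrectable_iff_exists_mem_kernelCode hK, hsd.kernelCode_rev, hsd.kernelCode_rev_succ,
    uncorrectable_iff_row_mem_sup, ← dualCode_dualCode (_ ⊔ _), dualCode_sup, supp_add_one,
    dualCode_supportedOn, compl_compl, mem_dualCode]
  push Not
  constructor
  · rintro ⟨c, hc, hc', hsupp⟩
    refine ⟨c, ⟨hc, hsupp⟩, ?_⟩
    rwa [dotProduct_comm, Ne, ← mem_dualCode_kernelCode_iff hc]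
  · rintro ⟨c, ⟨hc, hsupp⟩, hne⟩
    refine ⟨c, hc, ?_, hsupp⟩
    rwa [mem_dualCode_kernelCode_iff hc, dotProduct_comm]

end Codes

section Counting

variable {ℓ : ℕ}

def erasureProb (z : ℝ) (e : Fin ℓ → ZMod 2) : ℝ := z ^ wt e * (1 - z) ^ (ℓ - wt e)

theorem wt_le (e : Fin ℓ → ZMod 2) : wt e ≤ ℓ :=
  (Finset.card_filter_le _ _).trans (Finset.card_fin ℓ).le

theorem card_filter_not_ne_zero (e : Fin ℓ → ZMod 2) :
    (Finset.univ.filter fun j => ¬ e j ≠ 0).card = ℓ - wt e := by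
  have h := Finset.card_filter_add_card_filter_not (s := Finset.univ) (fun j => e j ≠ 0)
  rw [Finset.card_univ, Fintype.card_fin] at h
  rw [wt]
  omega

theorem wt_add_one (e : Fin ℓ → ZMod 2) : wt (e + 1) = ℓ - wt e := by
  rw [← card_filter_not_ne_zero, wt]
  congr 1
  exact Finset.filter_congr fun j _ => (zmod2_add_one_ne_zero_iff (e j)).trans not_not.symm

theorem erasureProb_add_one (z : ℝ) (e : Fin ℓ → ZMod 2) :
    erasureProb z (e + 1) = erasureProb (1 - z) e := by
  rw [erasureProb, erasureProb, wt_add_one, Nat.sub_sub_self (wt_le e), sub_sub_cancel, mul_comm]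

theorem erasureProb_eq_prod (z : ℝ) (e : Fin ℓ → ZMod 2) :
    erasureProb z e = ∏ j, if e j ≠ 0 then z else 1 - z := by
  rw [Finset.prod_ite, Finset.prod_const, Finset.prod_const, card_filter_not_ne_zero, erasureProb, wt]

theorem sum_erasureProb (z : ℝ) : ∑ e : Fin ℓ → ZMod 2, erasureProb z e = 1 := by
  simp only [erasureProb_eq_prod]
  rw [← Fintype.prod_sum (fun _ a => if a ≠ 0 then z else 1 - z)]
  refine Finset.prod_eq_one fun j _ => ?_
  rw [show (Finset.univ : Finset (ZMod 2)) = {0, 1} by decide, Finset.sum_pair (by decide)]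
  simp

open Classical in
theorem fpoly_eq_sum_erasureProb (K : Matrix (Fin ℓ) (Fin ℓ) (ZMod 2)) (i : Fin ℓ) (z : ℝ) :
    fpoly K i z = ∑ e with Uncorrectable K i e, erasureProb z e := by
  rw [fpoly, ← Finset.sum_fiberwise_of_maps_to (g := wt) (t := Finset.range (ℓ + 1))
    (fun e _ => Finset.mem_range_succ_iff.mpr (wt_le e))]
  refine Finset.sum_congr rfl fun w _ => ?_
  rw [Ecount, Nat.card_eq_fintype_card, Fintype.card_subtype, Finset.filter_filter,
    Finset.sum_congr rfl fun e he => by rw [erasureProb, (Finset.mem_filter.mp he).2.2],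
    Finset.sum_const, nsmul_eq_mul, mul_assoc]

open Classical in
theorem fpoly_one_sub_eq_sum (K : Matrix (Fin ℓ) (Fin ℓ) (ZMod 2)) (i : Fin ℓ) (z : ℝ) :
    fpoly K i (1 - z) = ∑ e with Uncorrectable K i (e + 1), erasureProb z e := by
  rw [fpoly_eq_sum_erasureProb, Finset.sum_filter, Finset.sum_filter,
    ← Equiv.sum_comp (Equiv.addRight 1)]
  simp only [Equiv.coe_addRight, erasureProb_add_one, sub_sub_cancel]

end Counting

theorem duality_theorem_general {ℓ : ℕ}
    (K : Matrix (Fin ℓ) (Fin ℓ) (ZMod 2)) (hK : IsUnit K.det)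
    (hsd : SelfDual K) (i : Fin ℓ) (z : ℝ) :
    fpoly K i.rev z = 1 - fpoly K i (1 - z) := by
  classical
  rw [fpoly_one_sub_eq_sum, fpoly_eq_sum_erasureProb, ← sum_erasureProb z,
    ← Finset.sum_filter_add_sum_filter_not Finset.univ fun e => Uncorrectable K i (e + 1)]
  simp only [hsd.uncorrectable_rev_iff hK]
  ring

/-- Duality Theorem: for a self-dual kernel, `f_{ℓ+1-i}(z) = 1 - f_i(1-z)`. -/
theorem duality_theorem {ℓ : ℕ} (hℓ : 0 < ℓ)
    (K : Matrix (Fin ℓ) (Fin ℓ) (ZMod 2)) (hK : IsUnit K.det)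
    (hsd : SelfDual K) (i : Fin ℓ) (z : ℝ) :
    fpoly K i.rev z = 1 - fpoly K i (1 - z) :=
  duality_theorem_general K hK hsd i z
end

section
/- Let K be an invertible ℓ×ℓ matrix over F_2 and fix i with 1 ≤ i ≤ ℓ. Let d_i be the minimum Hamming weight of a vector in C_{i-1} \ C_i (equivalently, the Hamming distance from g_i to C_i, the i-th partial distance of K). Then E_{i,w} = 0 for all w < d_i, and E_{i,d_i} equals the number of vectors of weight d_i in C_{i-1} \ C_i; in particular E_{i,d_i} > 0, so the minimum weight of an erasure pattern uncorrectable for bit-channel i equals d_i. -/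
/-! Writing `u = u' - u''`, a pair of inputs witnessing that `e` is uncorrectable for channel `i`
is the same as a codeword `c = u K` of `C_i \ C_{i+1}` (`u` vanishes before `i`, `u i = 1`)
that vanishes off `supp e`. So `wt e ≥ wt c ≥ d`, and when `wt e = d` the inclusion of supports
is an equality, which over `F_2` forces `e = c`. -/

open Matrix

section Weight

variable {ℓ : ℕ}

theorem wt_eq_ncard_supp (v : Fin ℓ → ZMod 2) : wt v = (supp v).ncard := by
  rw [wt, ← Set.ncard_coe_finset]
  congr 1
  ext j
  simp [supp]

theorem eq_of_supp_eq {c e : Fin ℓ → ZMod 2} (h : supp c = supp e) : c = e := by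
  funext j
  exact (by decide : ∀ x y : ZMod 2, (x ≠ 0 ↔ y ≠ 0) → x = y) _ _ (Set.ext_iff.mp h j)

theorem wt_le_wt_of_supp_subset {c e : Fin ℓ → ZMod 2} (h : supp c ⊆ supp e) :
    wt c ≤ wt e := by
  simpa only [wt_eq_ncard_supp] using Set.ncard_le_ncard h

theorem eq_of_supp_subset_of_wt_le {c e : Fin ℓ → ZMod 2} (h : supp c ⊆ supp e)
    (hw : wt e ≤ wt c) : c = e :=
  eq_of_supp_eq <| Set.eq_of_subset_of_ncard_le h (by simpa only [wt_eq_ncard_supp] using hw)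

variable {S : Set (Fin ℓ → ZMod 2)} {d : ℕ}

theorem le_wt_of_supp_subset (hd : d ∈ lowerBounds (wt '' S)) {c e : Fin ℓ → ZMod 2}
    (hc : c ∈ S) (h : supp c ⊆ supp e) : d ≤ wt e :=
  (hd ⟨c, hc, rfl⟩).trans (wt_le_wt_of_supp_subset h)

theorem exists_supp_subset_and_wt_eq_iff (hd : d ∈ lowerBounds (wt '' S))
    (e : Fin ℓ → ZMod 2) :
    ((∃ c ∈ S, supp c ⊆ supp e) ∧ wt e = d) ↔ e ∈ S ∧ wt e = d := by
  refine ⟨fun ⟨⟨c, hc, hce⟩, hw⟩ => ?_, fun ⟨he, hw⟩ => ⟨⟨e, he, subset_rfl⟩, hw⟩⟩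
  obtain rfl : c = e := eq_of_supp_subset_of_wt_le hce (hw ▸ hd ⟨c, hc, rfl⟩)
  exact ⟨hc, hw⟩

end Weight

section KernelCode

variable {ℓ : ℕ} {K : Matrix (Fin ℓ) (Fin ℓ) (ZMod 2)}

theorem vecMul_mem_kernelCode_iff (hK : IsUnit K.det) {m : ℕ} {u : Fin ℓ → ZMod 2} :
    u ᵥ* K ∈ kernelCode K m ↔ ∀ r : Fin ℓ, (r : ℕ) < m → u r = 0 := by
  constructor
  · intro hu r hr
    -- `c ᵥ* K⁻¹` is the coordinate vector of `c` in the basis of rows of `K`.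
    suffices ∀ c ∈ kernelCode K m, (c ᵥ* K⁻¹) r = 0 by
      simpa [vecMul_vecMul, mul_nonsing_inv K hK] using this _ hu
    intro c hc
    induction hc using Submodule.span_induction with
    | mem v hv =>
      obtain ⟨r₀, hr₀, rfl⟩ := hv
      have hne : r₀ ≠ r := fun h => by subst h; omega
      rw [← mul_apply_eq_vecMul, mul_nonsing_inv K hK, one_apply_ne hne]
    | zero => simp
    | add a b _ _ ha hb => simp [add_vecMul, ha, hb]
    | smul t a _ ha => simp [smul_vecMul, ha]
  · intro hu
    rw [vecMul_eq_sum]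
    refine Submodule.sum_mem _ fun r _ => ?_
    by_cases hr : (r : ℕ) < m
    · simp [hu r hr]
    · exact Submodule.smul_mem _ _ (Submodule.subset_span ⟨r, by omega, rfl⟩)

theorem uncorrectable_iff (hK : IsUnit K.det) (i : Fin ℓ) (e : Fin ℓ → ZMod 2) :
    Uncorrectable K i e ↔
      ∃ c ∈ (kernelCode K i : Set _) \ kernelCode K (i + 1), supp c ⊆ supp e := by
  constructor
  · rintro ⟨u', u'', hlt, hi, hagree⟩
    refine ⟨(u' - u'') ᵥ* K, ⟨?_, ?_⟩, ?_⟩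
    · rw [SetLike.mem_coe, vecMul_mem_kernelCode_iff hK]
      intro r hr
      simp [hlt r hr]
    · rw [SetLike.mem_coe, vecMul_mem_kernelCode_iff hK]
      intro h
      exact hi (sub_eq_zero.mp (h i (Nat.lt_succ_self _)))
    · intro j hj
      by_contra hej
      exact hj (by simp [sub_vecMul, hagree j (not_not.mp hej)])
  · rintro ⟨c, ⟨hci, hcj⟩, hce⟩
    have hc : c ᵥ* K⁻¹ ᵥ* K = c := by
      rw [vecMul_vecMul, nonsing_inv_mul K hK, vecMul_one]
    rw [SetLike.mem_coe, ← hc, vecMul_mem_kernelCode_iff hK] at hci hcj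
    refine ⟨c ᵥ* K⁻¹, 0, fun j hj => hci j hj, fun h => hcj fun r hr => ?_, fun j hj => ?_⟩
    · rcases (Nat.lt_succ_iff.mp hr).lt_or_eq with hr | hr
      · exact hci r hr
      · exact (Fin.ext hr : r = i) ▸ h
    · rw [hc, zero_vecMul]
      by_contra hcj_ne
      exact hce hcj_ne hj

end KernelCode

theorem min_weight_uncorrectable_general {ℓ : ℕ}
    (K : Matrix (Fin ℓ) (Fin ℓ) (ZMod 2)) (hK : IsUnit K.det)
    (i : Fin ℓ) (d : ℕ)
    (hd : IsLeast {w | ∃ c, c ∈ kernelCode K (i : ℕ) ∧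
      c ∉ kernelCode K ((i : ℕ) + 1) ∧ wt c = w} d) :
    (∀ w, w < d → Ecount K i w = 0) ∧
    Ecount K i d = Nat.card {c : Fin ℓ → ZMod 2 // c ∈ kernelCode K (i : ℕ) ∧
      c ∉ kernelCode K ((i : ℕ) + 1) ∧ wt c = d} ∧
    0 < Ecount K i d ∧
    IsLeast {w | ∃ e, Uncorrectable K i e ∧ wt e = w} d := by
  set S := (kernelCode K i : Set (Fin ℓ → ZMod 2)) \ kernelCode K (i + 1)
  have hS : IsLeast (wt '' S) d := by
    simpa only [Set.image, S, Set.mem_sdiff, SetLike.mem_coe, and_assoc] using hd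
  have hlow : ∀ e, Uncorrectable K i e → d ≤ wt e := fun e he => by
    obtain ⟨c, hc, hce⟩ := (uncorrectable_iff hK i e).mp he
    exact le_wt_of_supp_subset hS.2 hc hce
  have hmin (e) : Uncorrectable K i e ∧ wt e = d ↔
      e ∈ kernelCode K i ∧ e ∉ kernelCode K (i + 1) ∧ wt e = d := by
    rw [uncorrectable_iff hK, exists_supp_subset_and_wt_eq_iff hS.2]
    exact and_assoc
  have hcount : Ecount K i d = Nat.card {c : Fin ℓ → ZMod 2 // c ∈ kernelCode K i ∧
      c ∉ kernelCode K (i + 1) ∧ wt c = d} :=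
    Nat.card_congr (Equiv.subtypeEquivRight hmin)
  obtain ⟨c, ⟨hci, hcj⟩, hcd⟩ := hS.1
  have hc : Uncorrectable K i c ∧ wt c = d := (hmin c).mpr ⟨hci, hcj, hcd⟩
  refine ⟨fun w hw => ?_, hcount, Nat.card_pos_iff.mpr ⟨⟨⟨c, hc⟩⟩, inferInstance⟩, ⟨c, hc⟩, ?_⟩
  · exact Nat.card_eq_zero.mpr (.inl ⟨fun ⟨e, he, hwe⟩ => absurd (hlow e he) (by omega)⟩)
  · rintro w ⟨e, he, rfl⟩
    exact hlow e he

/-- The minimum weight of an uncorrectable erasure pattern for bit-channel `i`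
equals the `i`-th partial distance `d_i`, `E_{i,w} = 0` for `w < d_i`, and
`E_{i,d_i}` is the number of minimum-weight vectors of `C_{i-1} \ C_i`. -/
theorem min_weight_uncorrectable {ℓ : ℕ} (hℓ : 0 < ℓ)
    (K : Matrix (Fin ℓ) (Fin ℓ) (ZMod 2)) (hK : IsUnit K.det)
    (i : Fin ℓ) (d : ℕ)
    (hd : IsLeast {w | ∃ c, c ∈ kernelCode K (i : ℕ) ∧
      c ∉ kernelCode K ((i : ℕ) + 1) ∧ wt c = w} d) :
    (∀ w, w < d → Ecount K i w = 0) ∧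
    Ecount K i d = Nat.card {c : Fin ℓ → ZMod 2 // c ∈ kernelCode K (i : ℕ) ∧
      c ∉ kernelCode K ((i : ℕ) + 1) ∧ wt c = d} ∧
    0 < Ecount K i d ∧
    IsLeast {w | ∃ e, Uncorrectable K i e ∧ wt e = w} d :=
  min_weight_uncorrectable_general K hK i d hd
end

section
/- Let K be an invertible ℓ×ℓ matrix over F_2, fix i with 1 ≤ i ≤ ℓ, and let A_j denote the number of vectors of Hamming weight j in the coset C_{i-1} \ C_i. Then for every w with 0 ≤ w ≤ ℓ, E_{i,w} ≤ min( ∑_{j=0}^{w} binom(ℓ-j, w-j)·A_j , binom(ℓ, w) ). -/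
/-!
If `u' K` and `u'' K` agree outside `supp e` while `u'` and `u''` first differ at `i`, then
`c = (u' - u'') K` lies in `C_{i-1}` and is covered by `e`; it is not in `C_i`, since `K` is
invertible and `(u' - u'')_i ≠ 0`. So every uncorrectable pattern of weight `w` covers a vector of
`C_{i-1} \ C_i` of some weight `j ≤ w`, and a fixed vector of weight `j` is covered by exactly
`binom(ℓ - j, w - j)` patterns of weight `w`. A union bound over the coset gives the first bound.
-/

open Finset Matrix

section

variable {ℓ : ℕ}

def suppFinset (v : Fin ℓ → ZMod 2) : Finset (Fin ℓ) := {j | v j ≠ 0}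

theorem wt_eq_card_suppFinset (v : Fin ℓ → ZMod 2) : wt v = #(suppFinset v) := rfl

theorem suppFinset_injective : Function.Injective (suppFinset (ℓ := ℓ)) := by
  intro e e' h
  funext k
  have hk : e k ≠ 0 ↔ e' k ≠ 0 := by simpa [suppFinset] using congrArg (k ∈ ·) h
  have binary : ∀ a : ZMod 2, a = 0 ∨ a = 1 := by decide
  rcases binary (e k) with h₁ | h₁ <;> rcases binary (e' k) with h₂ | h₂ <;> simp_all

theorem card_wt_eq_superset_le (s : Finset (Fin ℓ)) {w : ℕ} (hsw : #s ≤ w) :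
    #{e : Fin ℓ → ZMod 2 | wt e = w ∧ s ⊆ suppFinset e} ≤ (ℓ - #s).choose (w - #s) := by
  calc #{e : Fin ℓ → ZMod 2 | wt e = w ∧ s ⊆ suppFinset e}
      ≤ #{t ∈ (univ : Finset (Fin ℓ)).powersetCard w | s ⊆ t} := by
        refine card_le_card_of_injOn suppFinset (fun e he => ?_) suppFinset_injective.injOn
        simpa [mem_powersetCard, ← wt_eq_card_suppFinset] using he
    _ = (ℓ - #s).choose (w - #s) := by
        rw [card_filter_powersetCard_subset s univ w (subset_univ s) hsw, card_univ,
          Fintype.card_fin]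

theorem mem_kernelCode_iff {K : Matrix (Fin ℓ) (Fin ℓ) (ZMod 2)} {m : ℕ}
    {c : Fin ℓ → ZMod 2} :
    c ∈ kernelCode K m ↔
      ∃ u : Fin ℓ → ZMod 2, (∀ r : Fin ℓ, (r : ℕ) < m → u r = 0) ∧ u ᵥ* K = c := by
  constructor
  · intro hc
    induction hc using Submodule.span_induction with
    | mem x hx =>
      obtain ⟨r, hr, rfl⟩ := hx
      exact ⟨Pi.single r 1, fun r' hr' => Pi.single_eq_of_ne (by rintro rfl; omega) _,
        single_one_vecMul r K⟩
    | zero => exact ⟨0, fun _ _ => rfl, zero_vecMul K⟩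
    | add x y _ _ hx hy =>
      obtain ⟨u, hu, rfl⟩ := hx
      obtain ⟨v, hv, rfl⟩ := hy
      exact ⟨u + v, fun r hr => by simp [hu r hr, hv r hr], add_vecMul K u v⟩
    | smul a x _ hx =>
      obtain ⟨u, hu, rfl⟩ := hx
      exact ⟨a • u, fun r hr => by simp [hu r hr], smul_vecMul a u K⟩
  · rintro ⟨u, hu, rfl⟩
    rw [vecMul_eq_sum]
    refine Submodule.sum_mem _ fun r _ => ?_
    by_cases hr : m ≤ (r : ℕ)
    · exact Submodule.smul_mem _ _ (Submodule.subset_span ⟨r, hr, rfl⟩)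
    · simp [hu r (by omega)]

theorem Uncorrectable.exists_coset_vector_covered {K : Matrix (Fin ℓ) (Fin ℓ) (ZMod 2)}
    (hK : IsUnit K.det) {i : Fin ℓ} {e : Fin ℓ → ZMod 2} (he : Uncorrectable K i e) :
    ∃ c ∈ kernelCode K i, c ∉ kernelCode K (i + 1) ∧ suppFinset c ⊆ suppFinset e := by
  obtain ⟨u', u'', h_lt, h_i, h_out⟩ := he
  refine ⟨(u' - u'') ᵥ* K,
    mem_kernelCode_iff.2 ⟨u' - u'', fun r hr => sub_eq_zero.2 (h_lt r hr), rfl⟩, ?_, ?_⟩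
  · intro h
    obtain ⟨v, hv, hvK⟩ := mem_kernelCode_iff.1 h
    have hv_eq := vecMul_injective_of_isUnit ((isUnit_iff_isUnit_det K).2 hK) hvK
    exact sub_ne_zero.2 h_i ((congrFun hv_eq i).symm.trans (hv i (Nat.lt_succ_self _)))
  · intro k
    simp only [suppFinset, mem_filter, mem_univ, true_and, sub_vecMul, Pi.sub_apply]
    contrapose!
    intro hk
    rw [h_out k hk, sub_self]

noncomputable def codeCoset (K : Matrix (Fin ℓ) (Fin ℓ) (ZMod 2)) (i : ℕ) :
    Finset (Fin ℓ → ZMod 2) := by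
  classical exact {c | c ∈ kernelCode K i ∧ c ∉ kernelCode K (i + 1)}

theorem mem_codeCoset {K : Matrix (Fin ℓ) (Fin ℓ) (ZMod 2)} {i : ℕ} {c : Fin ℓ → ZMod 2} :
    c ∈ codeCoset K i ↔ c ∈ kernelCode K i ∧ c ∉ kernelCode K (i + 1) := by
  simp [codeCoset]

theorem natCard_codeCoset_wt_eq (K : Matrix (Fin ℓ) (Fin ℓ) (ZMod 2)) (i j : ℕ) :
    Nat.card {c : Fin ℓ → ZMod 2 // c ∈ kernelCode K i ∧ c ∉ kernelCode K (i + 1) ∧ wt c = j} =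
      #{c ∈ codeCoset K i | wt c = j} := by
  classical
  rw [Nat.card_eq_fintype_card, Fintype.card_subtype]
  congr 1
  ext c
  simp [mem_codeCoset, and_assoc]

open Classical in
theorem Ecount_eq_card (K : Matrix (Fin ℓ) (Fin ℓ) (ZMod 2)) (i : Fin ℓ) (w : ℕ) :
    Ecount K i w = #{e | Uncorrectable K i e ∧ wt e = w} := by
  rw [Ecount, Nat.card_eq_fintype_card, Fintype.card_subtype]

theorem Ecount_le_choose (K : Matrix (Fin ℓ) (Fin ℓ) (ZMod 2)) (i : Fin ℓ) (w : ℕ) :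
    Ecount K i w ≤ ℓ.choose w := by
  classical
  rw [Ecount_eq_card]
  calc #{e | Uncorrectable K i e ∧ wt e = w}
      ≤ #{e : Fin ℓ → ZMod 2 | wt e = w ∧ ∅ ⊆ suppFinset e} :=
        card_le_card fun e => by simp +contextual
    _ ≤ ℓ.choose w := by simpa using card_wt_eq_superset_le ∅ (Nat.zero_le w)

theorem Ecount_le_sum_codeCoset {K : Matrix (Fin ℓ) (Fin ℓ) (ZMod 2)} (hK : IsUnit K.det)
    (i : Fin ℓ) (w : ℕ) :
    Ecount K i w ≤ ∑ c ∈ codeCoset K i with wt c ≤ w, (ℓ - wt c).choose (w - wt c) := by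
  classical
  rw [Ecount_eq_card]
  calc #{e | Uncorrectable K i e ∧ wt e = w}
      ≤ #((codeCoset K i).filter (wt · ≤ w) |>.biUnion
          fun c => {e : Fin ℓ → ZMod 2 | wt e = w ∧ suppFinset c ⊆ suppFinset e}) := by
        refine card_le_card fun e he => ?_
        obtain ⟨he, hwt⟩ := (mem_filter.1 he).2
        obtain ⟨c, hc, hc', hce⟩ := he.exists_coset_vector_covered hK
        simp only [mem_biUnion, mem_filter, mem_univ, true_and, mem_codeCoset]
        exact ⟨c, ⟨⟨hc, hc'⟩, hwt ▸ card_le_card hce⟩, hwt, hce⟩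
    _ ≤ _ := card_biUnion_le
    _ ≤ _ := sum_le_sum fun c hc => card_wt_eq_superset_le _ (mem_filter.1 hc).2

theorem sum_codeCoset_choose_eq (K : Matrix (Fin ℓ) (Fin ℓ) (ZMod 2)) (i w : ℕ) :
    ∑ c ∈ codeCoset K i with wt c ≤ w, (ℓ - wt c).choose (w - wt c) =
      ∑ j ∈ range (w + 1), (ℓ - j).choose (w - j) * #{c ∈ codeCoset K i | wt c = j} := by
  rw [← sum_fiberwise_of_maps_to' (t := range (w + 1)) (g := wt)
    (f := fun j => (ℓ - j).choose (w - j)) (fun c hc => mem_range_succ_iff.2 (mem_filter.1 hc).2)]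
  refine sum_congr rfl fun j hj => ?_
  rw [sum_const, smul_eq_mul, mul_comm, filter_filter]
  congr 2
  ext c
  simp only [mem_filter, and_congr_right_iff, and_iff_right_iff_imp]
  intro _ hc
  exact hc ▸ mem_range_succ_iff.1 hj

end

theorem Ecount_upper_bound_general {ℓ : ℕ}
    (K : Matrix (Fin ℓ) (Fin ℓ) (ZMod 2)) (hK : IsUnit K.det)
    (i : Fin ℓ) (A : ℕ → ℕ)
    (hA : ∀ j, A j = Nat.card {c : Fin ℓ → ZMod 2 // c ∈ kernelCode K (i : ℕ) ∧
      c ∉ kernelCode K ((i : ℕ) + 1) ∧ wt c = j})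
    (w : ℕ) :
    Ecount K i w ≤
      min (∑ j ∈ Finset.range (w + 1), (ℓ - j).choose (w - j) * A j) (ℓ.choose w) := by
  refine le_min ?_ (Ecount_le_choose K i w)
  calc Ecount K i w
      ≤ ∑ c ∈ codeCoset K i with wt c ≤ w, (ℓ - wt c).choose (w - wt c) :=
        Ecount_le_sum_codeCoset hK i w
    _ = ∑ j ∈ Finset.range (w + 1), (ℓ - j).choose (w - j) * A j := by
        simp only [sum_codeCoset_choose_eq, hA, natCard_codeCoset_wt_eq]

/-- Upper bound on `E_{i,w}` in terms of the weight enumerator of the coset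
`C_{i-1} \ C_i`. -/
theorem Ecount_upper_bound {ℓ : ℕ} (hℓ : 0 < ℓ)
    (K : Matrix (Fin ℓ) (Fin ℓ) (ZMod 2)) (hK : IsUnit K.det)
    (i : Fin ℓ) (A : ℕ → ℕ)
    (hA : ∀ j, A j = Nat.card {c : Fin ℓ → ZMod 2 // c ∈ kernelCode K (i : ℕ) ∧
      c ∉ kernelCode K ((i : ℕ) + 1) ∧ wt c = j})
    (w : ℕ) (hw : w ≤ ℓ) :
    Ecount K i w ≤
      min (∑ j ∈ Finset.range (w + 1), (ℓ - j).choose (w - j) * A j) (ℓ.choose w) :=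
  Ecount_upper_bound_general K hK i A hA w
end
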